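/- (Theorem 2, part 1) The decision regions Φ_{B_r} and Φ_{B_b} are self-symmetric with respect to the line p1 = p2: if (p1,p2) ∈ Φ_{B_r} then (p2,p1) ∈ Φ_{B_r}, and if (p1,p2) ∈ Φ_{B_b} then (p2,p1) ∈ Φ_{B_b}. -/

import Mathlib

/-!
Interchanging the two channels maps the Bellman operator to itself with `B_1` and `B_2`
exchanged, so the transpose `(p1, p2) ↦ V (p2, p1)` of the value function is again a bounded
fixed point. The Bellman operator is a `β`-contraction for the sup norm on the square, so bounded
fixed points are unique and `V` is symmetric. The actions `B_r` and `B_b` are themselves invariant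
under the interchange, hence so are their decision regions.
-/

open Set

noncomputable section

/-- Belief update for an unobserved channel: `T p = λ0 + (λ1 - λ0) p`. -/
def Tr (l0 l1 p : ℝ) : ℝ := l0 + (l1 - l0) * p

/-- The four power allocation actions. -/
inductive PAct
  | Bb  -- balanced
  | B1  -- bet on channel 1
  | B2  -- bet on channel 2
  | Br  -- conservative

/-- Action-value functional `W_a` computed from a function `W`. -/
def Q (l0 l1 β Rl Rh Cl Ch : ℝ) (W : ℝ → ℝ → ℝ) : PAct → ℝ → ℝ → ℝ
  | PAct.Bb => fun p1 p2 =>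
      (p1 + p2) * (Rl + Cl) - 2 * Cl +
        β * ((1 - p1) * (1 - p2) * W l0 l0 + p1 * p2 * W l1 l1 +
             p1 * (1 - p2) * W l1 l0 + (1 - p1) * p2 * W l0 l1)
  | PAct.B1 => fun p1 p2 =>
      (Rh + Ch) * p1 - Ch +
        β * (p1 * W l1 (Tr l0 l1 p2) + (1 - p1) * W l0 (Tr l0 l1 p2))
  | PAct.B2 => fun p1 p2 =>
      (Rh + Ch) * p2 - Ch +
        β * (p2 * W (Tr l0 l1 p1) l1 + (1 - p2) * W (Tr l0 l1 p1) l0)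
  | PAct.Br => fun p1 p2 => β * W (Tr l0 l1 p1) (Tr l0 l1 p2)

/-- The Bellman operator `L W = max over the four actions of W_a`. -/
def Bop (l0 l1 β Rl Rh Cl Ch : ℝ) (W : ℝ → ℝ → ℝ) (p1 p2 : ℝ) : ℝ :=
  max (max (Q l0 l1 β Rl Rh Cl Ch W PAct.Bb p1 p2)
           (Q l0 l1 β Rl Rh Cl Ch W PAct.B1 p1 p2))
      (max (Q l0 l1 β Rl Rh Cl Ch W PAct.B2 p1 p2)
           (Q l0 l1 β Rl Rh Cl Ch W PAct.Br p1 p2))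

/-- Boundedness on the belief space `[0,1] × [0,1]`. -/
def BddOnSq (W : ℝ → ℝ → ℝ) : Prop :=
  ∃ M : ℝ, ∀ p1 ∈ Icc (0:ℝ) 1, ∀ p2 ∈ Icc (0:ℝ) 1, |W p1 p2| ≤ M

/-- Being a fixed point of the Bellman operator on the belief space. -/
def IsFix (l0 l1 β Rl Rh Cl Ch : ℝ) (V : ℝ → ℝ → ℝ) : Prop :=
  ∀ p1 ∈ Icc (0:ℝ) 1, ∀ p2 ∈ Icc (0:ℝ) 1,
    V p1 p2 = Bop l0 l1 β Rl Rh Cl Ch V p1 p2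

/-- Decision region of action `a`: beliefs where action `a` achieves the value. -/
def Phi (l0 l1 β Rl Rh Cl Ch : ℝ) (V : ℝ → ℝ → ℝ) (a : PAct) : Set (ℝ × ℝ) :=
  {p : ℝ × ℝ | p.1 ∈ Icc (0:ℝ) 1 ∧ p.2 ∈ Icc (0:ℝ) 1 ∧
    V p.1 p.2 = Q l0 l1 β Rl Rh Cl Ch V a p.1 p.2}

def PAct.swap : PAct → PAct
  | PAct.Bb => PAct.Bb
  | PAct.B1 => PAct.B2
  | PAct.B2 => PAct.B1
  | PAct.Br => PAct.Br

section

variable {l0 l1 β Rl Rh Cl Ch : ℝ}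

theorem Tr_mem_Icc (hl0 : l0 ∈ Icc (0:ℝ) 1) (hl1 : l1 ∈ Icc (0:ℝ) 1) {p : ℝ}
    (hp : p ∈ Icc (0:ℝ) 1) : Tr l0 l1 p ∈ Icc (0:ℝ) 1 := by
  obtain ⟨hl00, hl01⟩ := hl0
  obtain ⟨hl10, hl11⟩ := hl1
  obtain ⟨hp0, hp1⟩ := hp
  have hTr : Tr l0 l1 p = (1 - p) * l0 + p * l1 := by unfold Tr; ring
  rw [hTr]
  constructor <;> nlinarith

theorem Q_swap (W : ℝ → ℝ → ℝ) (a : PAct) (p1 p2 : ℝ) :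
    Q l0 l1 β Rl Rh Cl Ch W a p1 p2 =
      Q l0 l1 β Rl Rh Cl Ch (Function.swap W) a.swap p2 p1 := by
  cases a
  case Bb => simp only [Q, PAct.swap, Function.swap]; ring
  all_goals rfl

theorem Bop_swap (W : ℝ → ℝ → ℝ) (p1 p2 : ℝ) :
    Bop l0 l1 β Rl Rh Cl Ch W p1 p2 = Bop l0 l1 β Rl Rh Cl Ch (Function.swap W) p2 p1 := by
  simp only [Bop, Q_swap W _ p1 p2, PAct.swap]
  exact max_max_max_comm _ _ _ _

theorem IsFix.swap {V : ℝ → ℝ → ℝ} (hV : IsFix l0 l1 β Rl Rh Cl Ch V) :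
    IsFix l0 l1 β Rl Rh Cl Ch (Function.swap V) := fun p1 hp1 p2 hp2 => by
  rw [Bop_swap, Function.swap, hV p2 hp2 p1 hp1]

theorem BddOnSq.swap {V : ℝ → ℝ → ℝ} (hV : BddOnSq V) : BddOnSq (Function.swap V) := by
  obtain ⟨M, hM⟩ := hV
  exact ⟨M, fun p1 hp1 p2 hp2 => hM p2 hp2 p1 hp1⟩

theorem mem_Phi_swap {V : ℝ → ℝ → ℝ} {a : PAct} {p1 p2 : ℝ} :
    (p1, p2) ∈ Phi l0 l1 β Rl Rh Cl Ch V a ↔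
      (p2, p1) ∈ Phi l0 l1 β Rl Rh Cl Ch (Function.swap V) a.swap := by
  simp only [Phi, mem_ofPred_eq, Q_swap V a p1 p2, Function.swap]
  tauto

theorem abs_convex_comb_le {t u v ε : ℝ} (ht : t ∈ Icc (0:ℝ) 1) (hu : |u| ≤ ε) (hv : |v| ≤ ε) :
    |t * u + (1 - t) * v| ≤ ε := by
  obtain ⟨ht0, ht1⟩ := ht
  calc |t * u + (1 - t) * v| ≤ t * |u| + (1 - t) * |v| := by
        refine (abs_add_le _ _).trans_eq ?_
        rw [abs_mul, abs_mul, abs_of_nonneg ht0, abs_of_nonneg (sub_nonneg.mpr ht1)]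
    _ ≤ t * ε + (1 - t) * ε := by gcongr
    _ = ε := by ring

theorem Q_congr (hl0 : l0 ∈ Icc (0:ℝ) 1) (hl1 : l1 ∈ Icc (0:ℝ) 1) {W W' : ℝ → ℝ → ℝ}
    (hWW' : ∀ p1 ∈ Icc (0:ℝ) 1, ∀ p2 ∈ Icc (0:ℝ) 1, W p1 p2 = W' p1 p2) (a : PAct)
    {p1 p2 : ℝ} (hp1 : p1 ∈ Icc (0:ℝ) 1) (hp2 : p2 ∈ Icc (0:ℝ) 1) :
    Q l0 l1 β Rl Rh Cl Ch W a p1 p2 = Q l0 l1 β Rl Rh Cl Ch W' a p1 p2 := by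
  have hT1 := Tr_mem_Icc hl0 hl1 hp1
  have hT2 := Tr_mem_Icc hl0 hl1 hp2
  cases a <;> simp only [Q, hWW' l0 hl0 l0 hl0, hWW' l0 hl0 l1 hl1, hWW' l1 hl1 l0 hl0,
    hWW' l1 hl1 l1 hl1, hWW' _ hl1 _ hT2, hWW' _ hl0 _ hT2, hWW' _ hT1 _ hl1, hWW' _ hT1 _ hl0,
    hWW' _ hT1 _ hT2]

theorem Phi_congr (hl0 : l0 ∈ Icc (0:ℝ) 1) (hl1 : l1 ∈ Icc (0:ℝ) 1) {W W' : ℝ → ℝ → ℝ}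
    (hWW' : ∀ p1 ∈ Icc (0:ℝ) 1, ∀ p2 ∈ Icc (0:ℝ) 1, W p1 p2 = W' p1 p2) (a : PAct) :
    Phi l0 l1 β Rl Rh Cl Ch W a = Phi l0 l1 β Rl Rh Cl Ch W' a := by
  ext ⟨p1, p2⟩
  simp only [Phi, mem_ofPred_eq]
  constructor <;> rintro ⟨hp1, hp2, h⟩ <;> refine ⟨hp1, hp2, ?_⟩
  · rwa [← hWW' p1 hp1 p2 hp2, ← Q_congr hl0 hl1 hWW' a hp1 hp2]
  · rwa [hWW' p1 hp1 p2 hp2, Q_congr hl0 hl1 hWW' a hp1 hp2]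

section Contraction

variable (hl0 : l0 ∈ Icc (0:ℝ) 1) (hl1 : l1 ∈ Icc (0:ℝ) 1) (hβ0 : 0 ≤ β)
  {W W' : ℝ → ℝ → ℝ} {ε : ℝ}
  (hWW' : ∀ p1 ∈ Icc (0:ℝ) 1, ∀ p2 ∈ Icc (0:ℝ) 1, |W p1 p2 - W' p1 p2| ≤ ε)
include hl0 hl1 hβ0 hWW'

-- The continuation part of every action value is `β` times an average of values at points of
-- the square, which is what makes the Bellman operator a `β`-contraction there.
theorem abs_Q_sub_Q_le (a : PAct) {p1 p2 : ℝ} (hp1 : p1 ∈ Icc (0:ℝ) 1) (hp2 : p2 ∈ Icc (0:ℝ) 1) :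
    |Q l0 l1 β Rl Rh Cl Ch W a p1 p2 - Q l0 l1 β Rl Rh Cl Ch W' a p1 p2| ≤ β * ε := by
  have hd {x y : ℝ} (hx : x ∈ Icc (0:ℝ) 1) (hy : y ∈ Icc (0:ℝ) 1) := hWW' x hx y hy
  have hβmul {x : ℝ} (hx : |x| ≤ ε) : |β * x| ≤ β * ε := by
    rw [abs_mul, abs_of_nonneg hβ0]; exact mul_le_mul_of_nonneg_left hx hβ0
  have hT1 := Tr_mem_Icc hl0 hl1 hp1
  have hT2 := Tr_mem_Icc hl0 hl1 hp2
  cases a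
  case Bb =>
    calc _ = |β * (p1 * (p2 * (W l1 l1 - W' l1 l1) + (1 - p2) * (W l1 l0 - W' l1 l0)) +
            (1 - p1) * (p2 * (W l0 l1 - W' l0 l1) + (1 - p2) * (W l0 l0 - W' l0 l0)))| := by
          congr 1; simp only [Q]; ring
      _ ≤ β * ε := hβmul <| abs_convex_comb_le hp1
          (abs_convex_comb_le hp2 (hd hl1 hl1) (hd hl1 hl0))
          (abs_convex_comb_le hp2 (hd hl0 hl1) (hd hl0 hl0))
  case B1 =>
    calc _ = |β * (p1 * (W l1 (Tr l0 l1 p2) - W' l1 (Tr l0 l1 p2)) +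
            (1 - p1) * (W l0 (Tr l0 l1 p2) - W' l0 (Tr l0 l1 p2)))| := by
          congr 1; simp only [Q]; ring
      _ ≤ β * ε := hβmul <| abs_convex_comb_le hp1 (hd hl1 hT2) (hd hl0 hT2)
  case B2 =>
    calc _ = |β * (p2 * (W (Tr l0 l1 p1) l1 - W' (Tr l0 l1 p1) l1) +
            (1 - p2) * (W (Tr l0 l1 p1) l0 - W' (Tr l0 l1 p1) l0))| := by
          congr 1; simp only [Q]; ring
      _ ≤ β * ε := hβmul <| abs_convex_comb_le hp2 (hd hT1 hl1) (hd hT1 hl0)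
  case Br =>
    calc _ = |β * (W (Tr l0 l1 p1) (Tr l0 l1 p2) - W' (Tr l0 l1 p1) (Tr l0 l1 p2))| := by
          congr 1; simp only [Q]; ring
      _ ≤ β * ε := hβmul (hd hT1 hT2)

theorem abs_Bop_sub_Bop_le {p1 p2 : ℝ} (hp1 : p1 ∈ Icc (0:ℝ) 1) (hp2 : p2 ∈ Icc (0:ℝ) 1) :
    |Bop l0 l1 β Rl Rh Cl Ch W p1 p2 - Bop l0 l1 β Rl Rh Cl Ch W' p1 p2| ≤ β * ε := by
  have hQ (a : PAct) := abs_Q_sub_Q_le (Rl := Rl) (Rh := Rh) (Cl := Cl) (Ch := Ch)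
    hl0 hl1 hβ0 hWW' a hp1 hp2
  refine (abs_max_sub_max_le_max _ _ _ _).trans (max_le ?_ ?_) <;>
    exact (abs_max_sub_max_le_max _ _ _ _).trans (max_le (hQ _) (hQ _))

end Contraction

theorem IsFix.eq_of_bddOnSq (hl0 : l0 ∈ Icc (0:ℝ) 1) (hl1 : l1 ∈ Icc (0:ℝ) 1) (hβ0 : 0 ≤ β)
    (hβ1 : β < 1) {V V' : ℝ → ℝ → ℝ} (hV : IsFix l0 l1 β Rl Rh Cl Ch V)
    (hV' : IsFix l0 l1 β Rl Rh Cl Ch V') (hVb : BddOnSq V) (hV'b : BddOnSq V') :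
    ∀ p1 ∈ Icc (0:ℝ) 1, ∀ p2 ∈ Icc (0:ℝ) 1, V p1 p2 = V' p1 p2 := by
  obtain ⟨M, hM⟩ := hVb
  obtain ⟨M', hM'⟩ := hV'b
  have hbound (n : ℕ) : ∀ p1 ∈ Icc (0:ℝ) 1, ∀ p2 ∈ Icc (0:ℝ) 1,
      |V p1 p2 - V' p1 p2| ≤ β ^ n * (M + M') := by
    induction n with
    | zero =>
      intro p1 hp1 p2 hp2
      rw [pow_zero, one_mul]
      exact (abs_sub _ _).trans (add_le_add (hM p1 hp1 p2 hp2) (hM' p1 hp1 p2 hp2))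
    | succ n ih =>
      intro p1 hp1 p2 hp2
      rw [hV p1 hp1 p2 hp2, hV' p1 hp1 p2 hp2, pow_succ', mul_assoc]
      exact abs_Bop_sub_Bop_le hl0 hl1 hβ0 ih hp1 hp2
  have hlim : Filter.Tendsto (fun n : ℕ => β ^ n * (M + M')) Filter.atTop (nhds 0) := by
    simpa using (tendsto_pow_atTop_nhds_zero_of_lt_one hβ0 hβ1).mul_const (M + M')
  intro p1 hp1 p2 hp2
  exact sub_eq_zero.mp <| abs_nonpos_iff.mp <|
    ge_of_tendsto' hlim fun n => hbound n p1 hp1 p2 hp2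

theorem IsFix.symm_of_bddOnSq (hl0 : l0 ∈ Icc (0:ℝ) 1) (hl1 : l1 ∈ Icc (0:ℝ) 1) (hβ0 : 0 ≤ β)
    (hβ1 : β < 1) {V : ℝ → ℝ → ℝ} (hV : IsFix l0 l1 β Rl Rh Cl Ch V) (hVb : BddOnSq V) :
    ∀ p1 ∈ Icc (0:ℝ) 1, ∀ p2 ∈ Icc (0:ℝ) 1, V p1 p2 = V p2 p1 :=
  hV.eq_of_bddOnSq hl0 hl1 hβ0 hβ1 hV.swap hVb hVb.swap

theorem mem_Phi_swap_of_symm (hl0 : l0 ∈ Icc (0:ℝ) 1) (hl1 : l1 ∈ Icc (0:ℝ) 1)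
    {V : ℝ → ℝ → ℝ} (hV : ∀ p1 ∈ Icc (0:ℝ) 1, ∀ p2 ∈ Icc (0:ℝ) 1, V p1 p2 = V p2 p1)
    {a : PAct} {p1 p2 : ℝ} :
    (p1, p2) ∈ Phi l0 l1 β Rl Rh Cl Ch V a ↔ (p2, p1) ∈ Phi l0 l1 β Rl Rh Cl Ch V a.swap := by
  rw [mem_Phi_swap, Phi_congr hl0 hl1 (fun q1 hq1 q2 hq2 => hV q2 hq2 q1 hq1)]

end

theorem regions_self_symmetric_general
    (l0 l1 β Rl Rh Cl Ch : ℝ)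
    (hl0 : l0 ∈ Icc (0:ℝ) 1) (hl1 : l1 ∈ Icc (0:ℝ) 1)
    (hβ0 : 0 ≤ β) (hβ1 : β < 1)
    (V : ℝ → ℝ → ℝ) (hVbdd : BddOnSq V)
    (hVfix : IsFix l0 l1 β Rl Rh Cl Ch V)
    (p1 p2 : ℝ) :
    ((p1, p2) ∈ Phi l0 l1 β Rl Rh Cl Ch V PAct.Br → (p2, p1) ∈ Phi l0 l1 β Rl Rh Cl Ch V PAct.Br) ∧
    ((p1, p2) ∈ Phi l0 l1 β Rl Rh Cl Ch V PAct.Bb → (p2, p1) ∈ Phi l0 l1 β Rl Rh Cl Ch V PAct.Bb) := by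
  have hsymm := hVfix.symm_of_bddOnSq hl0 hl1 hβ0 hβ1 hVbdd
  exact ⟨(mem_Phi_swap_of_symm hl0 hl1 hsymm).mp, (mem_Phi_swap_of_symm hl0 hl1 hsymm).mp⟩

/-- Theorem 2, part 1: `Φ_Br` and `Φ_Bb` are self-symmetric w.r.t. the line `p1 = p2`. -/
theorem regions_self_symmetric
    (l0 l1 β Rl Rh Cl Ch : ℝ)
    (hl0 : l0 ∈ Icc (0:ℝ) 1) (hl1 : l1 ∈ Icc (0:ℝ) 1) (hl01 : l0 < l1)
    (hβ0 : 0 ≤ β) (hβ1 : β < 1)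
    (hRl : 0 < Rl) (hRh : 0 < Rh) (hCl : 0 < Cl) (hCh : 0 < Ch)
    (hRlh : Rl < Rh) (hRh2 : Rh < 2 * Rl)
    (hClh : Cl < Ch) (hCh2 : Ch < 2 * Cl)
    (hRhCh : Ch < Rh) (hRlCl : Cl < Rl)
    (V : ℝ → ℝ → ℝ) (hVbdd : BddOnSq V)
    (hVfix : IsFix l0 l1 β Rl Rh Cl Ch V)
    (p1 p2 : ℝ) :
    ((p1, p2) ∈ Phi l0 l1 β Rl Rh Cl Ch V PAct.Br → (p2, p1) ∈ Phi l0 l1 β Rl Rh Cl Ch V PAct.Br) ∧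
    ((p1, p2) ∈ Phi l0 l1 β Rl Rh Cl Ch V PAct.Bb → (p2, p1) ∈ Phi l0 l1 β Rl Rh Cl Ch V PAct.Bb) :=
  regions_self_symmetric_general l0 l1 β Rl Rh Cl Ch hl0 hl1 hβ0 hβ1 V hVbdd hVfix p1 p2
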